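/- arXiv:cs/0606033 — 2 statements merged into one kernel-verified Lean document; each statement's English description precedes it below -/
import Mathlib

section
/- There exists a universal tuatara machine: a tuatara machine W such that for every tuatara machine V there is a constant c ≥ 0 with the property that for every x ∈ dom(V) there is a string p with |p| ≤ |x| + c and W(p) = V(x). (Concretely, if (C_i)_{i≥1} enumerates all tuatara machines, the machine W defined by W(0^i 1 x) = C_i(x) is such a universal tuatara machine.) -/
open scoped ENNReal

/-- The domain of a Turing machine (a partial function on binary strings). -/
def dom (f : List Bool →. List Bool) : Set (List Bool) := {p | (f p).Dom}

/-- A machine is self-delimiting if its domain is prefix-free. -/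
def SelfDelim (f : List Bool →. List Bool) : Prop :=
  ∀ p ∈ dom f, ∀ q ∈ dom f, p <+: q → p = q

/-- Chaitin's Omega number of a machine, in `[0,∞]`. -/
noncomputable def Omega (f : List Bool →. List Bool) : ℝ≥0∞ :=
  ∑' p : dom f, (2 : ℝ≥0∞)⁻¹ ^ (p : List Bool).length

/-- `bin n` is the binary expansion of `n` with the leading 1 removed. -/
def bin (n : ℕ) : List Bool := (Nat.bits n).reverse.tail

/-- `Υ[A]`: the set of positive integers whose `bin`-code lies in `A`. -/
def Ups (A : Set (List Bool)) : Set ℕ := {n | 1 ≤ n ∧ bin n ∈ A}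

/-- The zeta number of a machine, in `[0,∞]`. -/
noncomputable def zeta (f : List Bool →. List Bool) : ℝ≥0∞ :=
  ∑' n : Ups (dom f), ((n : ℕ) : ℝ≥0∞)⁻¹

/-- `U` is a universal self-delimiting Turing machine. -/
def UnivSD (U : List Bool →. List Bool) : Prop :=
  SelfDelim U ∧ ∀ C : List Bool →. List Bool, Partrec C → SelfDelim C →
    ∃ c : ℕ, ∀ x ∈ dom C, ∃ p : List Bool, p.length ≤ x.length + c ∧ U p = C x

/-- `T` is a universal (plain) Turing machine. -/
def UnivTM (T : List Bool →. List Bool) : Prop :=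
  ∀ C : List Bool →. List Bool, Partrec C →
    ∃ c : ℕ, ∀ x ∈ dom C, ∃ p : List Bool, p.length ≤ x.length + c ∧ T p = C x

/-- Program-size / plain complexity of a string w.r.t. a machine. -/
noncomputable def Cpx (f : List Bool →. List Bool) (y : List Bool) : ℕ :=
  sInf {n : ℕ | ∃ w : List Bool, w.length = n ∧ y ∈ f w}

/-- Natural complexity of a string w.r.t. a machine, with `min ∅ = ∞`. -/
noncomputable def nabla (f : List Bool →. List Bool) (y : List Bool) : ℝ≥0∞ :=
  sInf {c : ℝ≥0∞ | ∃ n : ℕ, 1 ≤ n ∧ y ∈ f (bin n) ∧ c = (n : ℝ≥0∞)}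

/-- The real number with binary digit sequence `x`. -/
noncomputable def realDigits (x : ℕ → Bool) : ℝ :=
  ∑' i : ℕ, (if x i then (1 : ℝ) else 0) * (2 : ℝ)⁻¹ ^ (i + 1)

/-- The extended nonnegative real with binary digit sequence `x`. -/
noncomputable def ennDigits (x : ℕ → Bool) : ℝ≥0∞ :=
  ∑' i : ℕ, (if x i then (1 : ℝ≥0∞) else 0) * (2 : ℝ≥0∞)⁻¹ ^ (i + 1)

/-- The string of the first `m` digits of the sequence `x`. -/
def prefixStr (x : ℕ → Bool) (m : ℕ) : List Bool := (List.range m).map x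

/-- A real is computable if it is approximated to within `2⁻ⁿ` by a computable
sequence of rationals. -/
def ComputableReal (s : ℝ) : Prop :=
  ∃ f : ℕ → ℚ, Computable f ∧ ∀ n : ℕ, |s - (f n : ℝ)| ≤ (2 : ℝ)⁻¹ ^ n

/-!
Every code `c` is turned into a tuatara machine `c.trimmed`: on input `x` it waits for a stage
`k` at which `c` has halted on `x` within `k` steps and the strings on which `c` has halted so
far have zeta-sum at most one, and only then runs `c` on `x`. Every finite part of its domain
lies in one such stage, so `ζ(c.trimmed) ≤ 1`; and if `c` is already tuatara, every stage
passes the test, so `c.trimmed = c`.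

The universal machine sends `0^(e+1) 1 x` to `(trimmed e) x`. The number coded by
`0^(e+1) 1 x` is at least `2^(e+1)` times the one coded by `x`, whence
`ζ ≤ ∑ₑ 2^-(e+1) ζ(trimmed e) ≤ 1`, while the prefix costs the constant `e + 2`.
-/

open Nat.Partrec (Code)
open Encodable Denumerable

def unbin (x : List Bool) : ℕ := x.foldl (fun n b => Nat.bit b n) 1

theorem unbin_append_singleton (x : List Bool) (b : Bool) :
    unbin (x ++ [b]) = Nat.bit b (unbin x) := by
  simp [unbin]

theorem bits_unbin (x : List Bool) : (unbin x).bits = x.reverse ++ [true] := by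
  induction x using List.reverseRecOn with
  | nil => simp [unbin, Nat.one_bits]
  | append_singleton x b ih =>
    have hx : unbin x ≠ 0 := fun h => by simp [h] at ih
    rw [unbin_append_singleton, Nat.bits_append_bit _ _ (fun h => absurd h hx), ih]
    simp

theorem bin_unbin (x : List Bool) : bin (unbin x) = x := by
  simp [bin, bits_unbin]

theorem unbin_bin {n : ℕ} (hn : n ≠ 0) : unbin (bin n) = n := by
  induction n using Nat.binaryRec' with
  | zero => exact absurd rfl hn
  | bit b m h ih =>
    rcases eq_or_ne m 0 with rfl | hm
    · simp [h rfl, bin, unbin, Nat.one_bits]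
    · have : bin (Nat.bit b m) = bin m ++ [b] := by
        rw [bin, Nat.bits_append_bit m b h, List.reverse_cons,
          List.tail_append_of_ne_nil (by
            rwa [Ne, List.reverse_eq_nil_iff, ← List.length_eq_zero_iff, Nat.size_eq_bits_len,
              Nat.size_eq_zero])]
        rfl
      rw [this, unbin_append_singleton, ih hm]

theorem size_unbin (x : List Bool) : (unbin x).size = x.length + 1 := by
  simp [← Nat.size_eq_bits_len, bits_unbin]

theorem unbin_lt (x : List Bool) : unbin x < 2 ^ (x.length + 1) :=
  size_unbin x ▸ Nat.lt_size_self _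

theorem two_pow_length_le_unbin (x : List Bool) : 2 ^ x.length ≤ unbin x :=
  Nat.lt_size.1 (by simp [size_unbin])

theorem unbin_ne_zero (x : List Bool) : unbin x ≠ 0 :=
  ((Nat.two_pow_pos _).trans_le (two_pow_length_le_unbin x)).ne'

def upsEquiv (A : Set (List Bool)) : Ups A ≃ A where
  toFun n := ⟨bin n, n.2.2⟩
  invFun x := ⟨unbin x, Nat.one_le_iff_ne_zero.2 (unbin_ne_zero x), by simp [bin_unbin]⟩
  left_inv n := Subtype.ext (unbin_bin (Nat.one_le_iff_ne_zero.1 n.2.1))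
  right_inv x := Subtype.ext (bin_unbin x)

theorem zeta_eq_tsum_dom (f : List Bool →. List Bool) :
    zeta f = ∑' x : dom f, (unbin x : ℝ≥0∞)⁻¹ := by
  rw [zeta, ← (upsEquiv (dom f)).symm.tsum_eq]
  rfl

def tag (e : ℕ) (x : List Bool) : List Bool := List.replicate (e + 1) false ++ true :: x

def untag (p : List Bool) : ℕ × List Bool := (p.findIdx id - 1, p.drop (p.findIdx id + 1))

theorem findIdx_tag (e : ℕ) (x : List Bool) : (tag e x).findIdx id = e + 1 := by
  induction e with
  | zero => simp [tag, List.findIdx_cons]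
  | succ e ih => simp_all [tag, List.replicate_succ, List.findIdx_cons]

theorem untag_tag (e : ℕ) (x : List Bool) : untag (tag e x) = (e, x) := by
  rw [untag, findIdx_tag]
  simp [tag, List.drop_append]

theorem tag_injective (e : ℕ) : Function.Injective (tag e) := fun x y h => by
  simpa [untag_tag] using congrArg (Prod.snd ∘ untag) h

theorem length_tag (e : ℕ) (x : List Bool) : (tag e x).length = x.length + (e + 2) := by
  simp [tag]
  omega

theorem two_pow_mul_unbin_le_unbin_tag (e : ℕ) (x : List Bool) :
    2 ^ (e + 1) * unbin x ≤ unbin (tag e x) :=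
  calc 2 ^ (e + 1) * unbin x
      ≤ 2 ^ (e + 1) * 2 ^ (x.length + 1) := Nat.mul_le_mul_left _ (unbin_lt x).le
    _ = 2 ^ (tag e x).length := by simp [tag, ← pow_add]
    _ ≤ unbin (tag e x) := two_pow_length_le_unbin _

theorem inv_unbin_tag_le (e : ℕ) (x : List Bool) :
    ((unbin (tag e x) : ℝ≥0∞))⁻¹ ≤ 2⁻¹ ^ (e + 1) * (unbin x : ℝ≥0∞)⁻¹ := by
  rw [← ENNReal.inv_pow, ← ENNReal.mul_inv (by simp) (by simp)]
  exact ENNReal.inv_le_inv.2 (by exact_mod_cast two_pow_mul_unbin_le_unbin_tag e x)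

theorem List.sum_map_le_tsum {α : Type*} {l : List α} (hl : l.Nodup) {s : Set α}
    (hs : ∀ x ∈ l, x ∈ s) (f : α → ℝ≥0∞) : (l.map f).sum ≤ ∑' x : s, f x := by
  classical
  rw [← List.sum_toFinset f hl, tsum_subtype s f]
  calc ∑ x ∈ l.toFinset, f x = ∑ x ∈ l.toFinset, s.indicator f x :=
        Finset.sum_congr rfl fun x hx =>
          (Set.indicator_of_mem (hs x (List.mem_toFinset.1 hx)) f).symm
    _ ≤ ∑' x, s.indicator f x := ENNReal.sum_le_tsum _

theorem Finset.sum_le_sum_map_of_subset {α : Type*} [DecidableEq α] {t : Finset α} {l : List α}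
    (hl : l.Nodup) (ht : ∀ x ∈ t, x ∈ l) (f : α → ℝ≥0∞) : ∑ x ∈ t, f x ≤ (l.map f).sum := by
  rw [← List.sum_toFinset f hl]
  exact Finset.sum_le_sum_of_subset fun x hx => List.mem_toFinset.2 (ht x hx)

theorem cast_sum_map_prod_div {l : List ℕ} (hl : ∀ n ∈ l, n ≠ 0) :
    (((l.map (l.prod / ·)).sum : ℕ) : ℝ≥0∞) =
      l.prod * (l.map fun n : ℕ => (n : ℝ≥0∞)⁻¹).sum := by
  rw [Nat.cast_list_sum, List.map_map, ← List.sum_map_mul_left]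
  refine congrArg List.sum (List.map_congr_left fun n hn => ?_)
  have hn0 : (n : ℝ≥0∞) ≠ 0 := Nat.cast_ne_zero.2 (hl n hn)
  conv_rhs => rw [← Nat.mul_div_cancel' (List.dvd_prod hn), Nat.cast_mul, mul_comm, ← mul_assoc,
    ENNReal.inv_mul_cancel hn0 (ENNReal.natCast_ne_top n), one_mul]
  rfl

theorem sum_map_prod_div_le_prod_iff {l : List ℕ} (hl : ∀ n ∈ l, n ≠ 0) :
    (l.map (l.prod / ·)).sum ≤ l.prod ↔ (l.map fun n : ℕ => (n : ℝ≥0∞)⁻¹).sum ≤ 1 := by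
  have hprod : (l.prod : ℝ≥0∞) ≠ 0 := Nat.cast_ne_zero.2 (List.prod_ne_zero fun h => hl 0 h rfl)
  rw [← ENNReal.mul_le_mul_iff_right hprod (ENNReal.natCast_ne_top _), mul_one,
    ← cast_sum_map_prod_div hl, Nat.cast_le]

namespace Nat.Partrec.Code

variable {α β : Type*} [Primcodable α] [Primcodable β] [Inhabited β]

/-- An output that decodes to nothing (impossible for the codes of functions `α →. β`) is read
as `default`, so that `c.evalTyped` halts exactly where `c.eval` does. -/
def evalTyped (c : Code) : α →. β :=
  fun a => (c.eval (encode a)).map fun m => (decode m).getD default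

theorem exists_evalTyped_eq {f : α →. β} (hf : Partrec f) : ∃ c : Code, c.evalTyped = f := by
  obtain ⟨c, hc⟩ := exists_code.1 hf
  refine ⟨c, funext fun a => ?_⟩
  simp [evalTyped, hc, encodek, Part.map_map, Function.comp_def, Part.map_id']

def haltsWithin (c : Code) (k : ℕ) (a : α) : Bool := (c.evaln k (encode a)).isSome

theorem haltsWithin_mono {c : Code} {k k' : ℕ} {a : α} (hk : k ≤ k')
    (h : c.haltsWithin k a) : c.haltsWithin k' a := by
  obtain ⟨y, hy⟩ := Option.isSome_iff_exists.1 h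
  exact Option.isSome_iff_exists.2 ⟨y, evaln_mono hk hy⟩

theorem encode_lt_of_haltsWithin {c : Code} {k : ℕ} {a : α} (h : c.haltsWithin k a) :
    encode a < k := by
  obtain ⟨y, hy⟩ := Option.isSome_iff_exists.1 h
  exact evaln_bound hy

theorem evalTyped_dom_iff {c : Code} {a : α} :
    (c.evalTyped a : Part β).Dom ↔ ∃ k, c.haltsWithin k a := by
  rw [evalTyped, Part.map_Dom, Part.dom_iff_mem]
  simp only [haltsWithin, Option.isSome_iff_exists, evaln_complete]
  exact exists_comm

def stage (c : Code) (k : ℕ) : List (List Bool) :=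
  ((List.range k).filterMap (decode₂ (List Bool))).filter (c.haltsWithin k)

theorem mem_stage {c : Code} {k : ℕ} {x : List Bool} : x ∈ c.stage k ↔ c.haltsWithin k x := by
  simp only [stage, List.mem_filter, List.mem_filterMap, List.mem_range, and_iff_right_iff_imp]
  exact fun h => ⟨encode x, encode_lt_of_haltsWithin h, encodek₂ x⟩

theorem nodup_stage (c : Code) (k : ℕ) : (c.stage k).Nodup :=
  (List.nodup_range.filterMap fun _ _ _ h h' =>
    (mem_decode₂.1 h).symm.trans (mem_decode₂.1 h')).filter _

/-- `∑ 1/n ≤ 1` over the numbers `n` coding the strings of the stage, with the denominators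
cleared by their product so that the test is primitive recursive. -/
def stageFits (c : Code) (k : ℕ) : Bool :=
  let l := (c.stage k).map unbin
  decide ((l.map (l.prod / ·)).sum ≤ l.prod)

theorem stageFits_iff {c : Code} {k : ℕ} :
    c.stageFits k ↔ ((c.stage k).map fun x => (unbin x : ℝ≥0∞)⁻¹).sum ≤ 1 := by
  rw [stageFits, decide_eq_true_iff,
    sum_map_prod_div_le_prod_iff (by simpa using fun x _ => unbin_ne_zero x), List.map_map]
  rfl

def admitted (c : Code) : Set (List Bool) := {x | ∃ k, c.haltsWithin k x ∧ c.stageFits k}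

theorem tsum_admitted_inv_unbin_le_one (c : Code) :
    ∑' x : c.admitted, (unbin x : ℝ≥0∞)⁻¹ ≤ 1 := by
  classical
  refine tsum_le_of_sum_le' zero_le_one fun s => ?_
  rcases s.eq_empty_or_nonempty with rfl | hs
  · simp
  -- The largest of the stages witnessing the elements of `s` contains them all, and it fits.
  choose kx hkx using fun x : c.admitted => x.2
  obtain ⟨x₀, -, hK⟩ := s.exists_mem_eq_sup hs kx
  have hstage : ∀ y ∈ s.map (Function.Embedding.subtype _), y ∈ c.stage (s.sup kx) := by
    simp only [Finset.mem_map, Function.Embedding.coe_subtype]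
    rintro _ ⟨x, hx, rfl⟩
    exact mem_stage.2 (haltsWithin_mono (s.le_sup hx) (hkx x).1)
  calc ∑ x ∈ s, (unbin x : ℝ≥0∞)⁻¹
      = ∑ y ∈ s.map (Function.Embedding.subtype _), (unbin y : ℝ≥0∞)⁻¹ := by
        rw [Finset.sum_map]; rfl
    _ ≤ ((c.stage (s.sup kx)).map fun y => (unbin y : ℝ≥0∞)⁻¹).sum :=
      Finset.sum_le_sum_map_of_subset (nodup_stage c _) hstage _
    _ ≤ 1 := stageFits_iff.1 (hK ▸ (hkx x₀).2)

def trimmed (c : Code) : List Bool →. List Bool := fun x =>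
  (Nat.rfind fun k => Part.some (c.haltsWithin k x && c.stageFits k)).bind fun _ => c.evalTyped x

theorem dom_trimmed_subset (c : Code) : dom c.trimmed ⊆ c.admitted := fun x hx => by
  obtain ⟨k, hk, -⟩ := Part.mem_bind_iff.1 (Part.get_mem hx)
  exact ⟨k, by simpa using Nat.rfind_spec hk⟩

theorem zeta_trimmed_le_one (c : Code) : zeta c.trimmed ≤ 1 := by
  rw [zeta_eq_tsum_dom]
  exact (ENNReal.tsum_mono_subtype (fun x => (unbin x : ℝ≥0∞)⁻¹) (dom_trimmed_subset c)).trans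
    (tsum_admitted_inv_unbin_le_one c)

theorem stageFits_of_zeta_le_one {c : Code} (h : zeta c.evalTyped ≤ 1) (k : ℕ) :
    c.stageFits k := by
  rw [stageFits_iff]
  calc _ ≤ ∑' x : dom c.evalTyped, (unbin x : ℝ≥0∞)⁻¹ :=
        List.sum_map_le_tsum (nodup_stage c k)
          (fun _ hx => (evalTyped_dom_iff (β := List Bool)).2 ⟨k, mem_stage.1 hx⟩) _
    _ ≤ 1 := zeta_eq_tsum_dom _ ▸ h

theorem trimmed_eq_of_zeta_le_one {c : Code} (h : zeta c.evalTyped ≤ 1) :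
    c.trimmed = c.evalTyped := by
  funext x
  refine Part.ext fun y => ⟨fun hy => (Part.mem_bind_iff.1 hy).choose_spec.2, fun hy => ?_⟩
  obtain ⟨k, hk⟩ := evalTyped_dom_iff.1
    (Part.dom_iff_mem.2 ⟨y, hy⟩ : (c.evalTyped x : Part (List Bool)).Dom)
  have hdom : (Nat.rfind fun k => Part.some (c.haltsWithin k x && c.stageFits k)).Dom :=
    Nat.rfind_dom.2 ⟨k, by simp [hk, stageFits_of_zeta_le_one h], fun _ => trivial⟩
  exact Part.mem_bind (Part.get_mem hdom) hy

end Nat.Partrec.Code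

section Computability

variable {α β σ : Type*} [Primcodable α] [Primcodable β] [Inhabited β] [Primcodable σ]

theorem Primrec.haltsWithin {f : σ → Code} {g : σ → ℕ} {h : σ → α} (hf : Primrec f)
    (hg : Primrec g) (hh : Primrec h) : Primrec fun s => (f s).haltsWithin (g s) (h s) :=
  Primrec.option_isSome.comp <| Code.primrec_evaln.comp <|
    Primrec.pair (Primrec.pair hg hf) (Primrec.encode.comp hh)

theorem Partrec.evalTyped {f : σ → Code} {g : σ → α} (hf : Computable f)
    (hg : Computable g) : Partrec fun s => ((f s).evalTyped (g s) : Part β) :=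
  (Code.eval_part.comp hf (Computable.encode.comp hg)).map
    (Primrec.option_getD_default.comp (Primrec.decode.comp Primrec.snd)).to_comp.to₂

theorem Primrec.nat_list_sum : Primrec (List.sum : List ℕ → ℕ) :=
  (Primrec.list_foldr .id (Primrec.const 0)
    (Primrec.nat_add.comp (Primrec.fst.comp .snd) (Primrec.snd.comp .snd)).to₂).of_eq
    fun _ => rfl

theorem Primrec.nat_list_prod : Primrec (List.prod : List ℕ → ℕ) :=
  (Primrec.list_foldr .id (Primrec.const 1)
    (Primrec.nat_mul.comp (Primrec.fst.comp .snd) (Primrec.snd.comp .snd)).to₂).of_eq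
    fun _ => rfl

theorem primrec_unbin : Primrec unbin :=
  Primrec.list_foldl .id (Primrec.const 1)
    (Primrec.cond (Primrec.snd.comp .snd)
      (Primrec.succ.comp (Primrec.nat_double.comp (Primrec.fst.comp .snd)))
      (Primrec.nat_double.comp (Primrec.fst.comp .snd))).to₂

theorem primrec₂_tag : Primrec₂ tag :=
  (Primrec.list_append.comp
    (Primrec.list_map (Primrec.list_range.comp (Primrec.succ.comp .fst)) (Primrec.const false).to₂)
    (Primrec.list_cons.comp (Primrec.const true) .snd)).to₂.of_eq fun e x => by
      simp [tag, List.map_const']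

theorem primrec_untag : Primrec untag :=
  have hidx : Primrec fun p : List Bool => p.findIdx id := Primrec.list_findIdx .id Primrec.snd
  Primrec.pair (Primrec.nat_sub.comp hidx (Primrec.const 1))
    (Primrec.list_drop.comp (Primrec.succ.comp hidx) .id)

theorem primrec₂_stage : Primrec₂ Code.stage := by
  have hR : PrimrecRel fun (x : List Bool) (q : Code × ℕ) => q.1.haltsWithin q.2 x = true :=
    Primrec.eq.comp (Primrec.haltsWithin (Primrec.fst.comp .snd) (Primrec.snd.comp .snd) .fst)
      (Primrec.const true)
  exact ((PrimrecRel.listFilter hR).comp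
    (Primrec.listFilterMap (Primrec.list_range.comp .snd) (Primrec.decode₂.comp .snd).to₂)
    .id).to₂.of_eq fun c k => by simp [Code.stage]

theorem primrec₂_stageFits : Primrec₂ Code.stageFits := by
  have hl : Primrec fun q : Code × ℕ => (q.1.stage q.2).map unbin :=
    Primrec.list_map (primrec₂_stage.comp .fst .snd) (primrec_unbin.comp .snd).to₂
  have hprod := Primrec.nat_list_prod.comp hl
  exact (Primrec.nat_le.comp (Primrec.nat_list_sum.comp (Primrec.list_map hl
    (Primrec.nat_div.comp (hprod.comp .fst) .snd).to₂)) hprod).decide.to₂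

end Computability

/-- The first conjunct rejects the strings that are not of the form `0^(e+1) 1 x`. -/
def acceptsAt (p : List Bool) (k : ℕ) : Bool :=
  decide (tag (untag p).1 (untag p).2 = p) &&
    (ofNat Code (untag p).1).haltsWithin k (untag p).2 && (ofNat Code (untag p).1).stageFits k

def univTuatara : List Bool →. List Bool := fun p =>
  (Nat.rfind fun k => Part.some (acceptsAt p k)).bind fun _ =>
    (ofNat Code (untag p).1).evalTyped (untag p).2

theorem univTuatara_tag (e : ℕ) (x : List Bool) :
    univTuatara (tag e x) = (ofNat Code e).trimmed x := by
  simp [univTuatara, acceptsAt, untag_tag, Code.trimmed]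

theorem dom_univTuatara_subset :
    dom univTuatara ⊆ ⋃ e, tag e '' dom (ofNat Code e).trimmed := by
  intro p hp
  obtain ⟨k, hk, -⟩ := Part.mem_bind_iff.1 (Part.get_mem hp)
  have hacc : acceptsAt p k := (Part.mem_some_iff.1 (Nat.rfind_spec hk)).symm
  have htag : tag (untag p).1 (untag p).2 = p := by
    simp only [acceptsAt, Bool.and_eq_true, decide_eq_true_eq] at hacc
    exact hacc.1.1
  refine Set.mem_iUnion.2 ⟨(untag p).1, (untag p).2, ?_, htag⟩
  show ((ofNat Code _).trimmed _).Dom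
  rwa [← univTuatara_tag, htag]

theorem primrec₂_acceptsAt : Primrec₂ acceptsAt := by
  have he : Primrec fun q : List Bool × ℕ => (untag q.1).1 :=
    Primrec.fst.comp (primrec_untag.comp .fst)
  have hx : Primrec fun q : List Bool × ℕ => (untag q.1).2 :=
    Primrec.snd.comp (primrec_untag.comp .fst)
  have hc := (Primrec.ofNat Code).comp he
  exact Primrec.and.comp (Primrec.and.comp
    (Primrec.eq.comp (primrec₂_tag.comp he hx) .fst).decide (Primrec.haltsWithin hc .snd hx))
    (primrec₂_stageFits.comp hc .snd)

theorem univTuatara_partrec : Partrec univTuatara :=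
  (Partrec.rfind primrec₂_acceptsAt.to_comp.partrec₂).bind
    (Partrec.evalTyped
      ((Primrec.ofNat Code).comp (Primrec.fst.comp (primrec_untag.comp .fst))).to_comp
      (Primrec.snd.comp (primrec_untag.comp .fst)).to_comp)

theorem zeta_le_tsum_of_dom_subset {W : List Bool →. List Bool} {M : ℕ → List Bool →. List Bool}
    (h : dom W ⊆ ⋃ e, tag e '' dom (M e)) : zeta W ≤ ∑' e, 2⁻¹ ^ (e + 1) * zeta (M e) := by
  simp only [zeta_eq_tsum_dom, ← ENNReal.tsum_mul_left]
  set w : List Bool → ℝ≥0∞ := fun p => (unbin p : ℝ≥0∞)⁻¹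
  calc ∑' p : dom W, w p
      ≤ ∑' p : ⋃ e, tag e '' dom (M e), w p := ENNReal.tsum_mono_subtype w h
    _ ≤ ∑' e, ∑' p : tag e '' dom (M e), w p := ENNReal.tsum_iUnion_le_tsum w _
    _ = ∑' e, ∑' x : dom (M e), w (tag e x) :=
        tsum_congr fun e => tsum_image w (tag_injective e).injOn
    _ ≤ _ := ENNReal.tsum_le_tsum fun e => ENNReal.tsum_le_tsum fun x => inv_unbin_tag_le e x

theorem zeta_univTuatara_le_one : zeta univTuatara ≤ 1 :=
  calc zeta univTuatara ≤ ∑' e, 2⁻¹ ^ (e + 1) * zeta (ofNat Code e).trimmed :=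
        zeta_le_tsum_of_dom_subset dom_univTuatara_subset
    _ ≤ ∑' e : ℕ, 2⁻¹ ^ (e + 1) :=
        ENNReal.tsum_le_tsum fun e => mul_le_of_le_one_right' (Code.zeta_trimmed_le_one _)
    _ = 1 := by
        rw [ENNReal.tsum_geometric_add_one, ENNReal.one_sub_inv_two, inv_inv,
          ENNReal.inv_mul_cancel two_ne_zero ENNReal.ofNat_ne_top]

/-- There exists a universal tuatara machine. -/
theorem stmt_9 :
    ∃ W : List Bool →. List Bool, Partrec W ∧ zeta W ≤ 1 ∧
      ∀ V : List Bool →. List Bool, Partrec V → zeta V ≤ 1 →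
        ∃ c : ℕ, ∀ x ∈ dom V, ∃ p : List Bool, p.length ≤ x.length + c ∧ W p = V x := by
  refine ⟨univTuatara, univTuatara_partrec, zeta_univTuatara_le_one, fun V hV hζ => ?_⟩
  obtain ⟨c, rfl⟩ := Code.exists_evalTyped_eq hV
  refine ⟨encode c + 2, fun x _ => ⟨tag (encode c) x, (length_tag _ _).le, ?_⟩⟩
  rw [univTuatara_tag, ofNat_encode, Code.trimmed_eq_of_zeta_le_one hζ]
end

section
/- For every universal self-delimiting Turing machine U and every universal Turing machine T, there exists a real β ∈ (0,1) which is Chaitin 1/2-random but not 1/2-K-random: there is a binary digit sequence x of β and a constant c ≥ 0 with H_U(x_0 ⋯ x_{m−1}) ≥ m/2 − c for all m ≥ 1, yet there is no constant c' ≥ 0 with K_T(x_0 ⋯ x_{m−1}) ≥ m/2 − c' for all m ≥ 1. -/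
open scoped ENNReal

/-!
Write `x = dilute y` for the sequence carrying `y` on the even positions and `0` on the odd
ones. If a `U`-program `w` prints `x[m]` with `m > 2|w| + 4`, the even bits of its output form a
prefix of `y` of length at least `|w| + 3`; by Kraft's inequality the cylinders of all these
strings have total coin-tossing measure at most `Ω_U / 8 ≤ 1 / 8`, so some `y` starting with `1`
avoids all of them, and then `x` is Chaitin `1/2`-random.

A plain machine, however, can read the length `l` of its input as the code of a prefix `y[t]`;
taking `l = encode y[t]` and the input `y[t, t + l)`, it prints `x[2(t + l)]`, so
`K_T(x[2(t + l)]) ≤ l + c`, which drops below `t + l - c'` for large `t`.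
-/

open MeasureTheory

lemma prefixStr_length (y : ℕ → Bool) (m : ℕ) : (prefixStr y m).length = m := by
  simp [prefixStr]

lemma prefixStr_prefix_prefixStr (y : ℕ → Bool) {m n : ℕ} (h : m ≤ n) :
    prefixStr y m <+: prefixStr y n := by
  obtain ⟨k, rfl⟩ := Nat.exists_eq_add_of_le h
  simp [prefixStr, List.range_add]

lemma prefixStr_succ (y : ℕ → Bool) (n : ℕ) :
    prefixStr y (n + 1) = prefixStr y n ++ [y n] := by
  simp [prefixStr, List.range_succ]

lemma prefixStr_add (y : ℕ → Bool) (m n : ℕ) :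
    prefixStr y (m + n) = prefixStr y m ++ (List.range n).map fun i => y (m + i) := by
  simp [prefixStr, List.range_add, Function.comp_def]

def prefixCylinder (σ : List Bool) : Set (ℕ → Bool) := {y | prefixStr y σ.length = σ}

lemma mem_prefixCylinder_prefixStr (y : ℕ → Bool) (m : ℕ) :
    y ∈ prefixCylinder (prefixStr y m) := by
  simp [prefixCylinder, prefixStr_length]

lemma prefixCylinder_eq_pi (σ : List Bool) :
    prefixCylinder σ = Set.pi (Finset.range σ.length : Set ℕ) fun i => {σ.getD i false} := by
  ext y
  simp only [prefixCylinder, prefixStr, Set.mem_ofPred_eq, List.ext_getElem_iff, List.length_map,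
    List.length_range, true_and, List.getElem_map, List.getElem_range, Set.mem_pi,
    Finset.coe_range, Set.mem_Iio, Set.mem_singleton_iff]
  exact ⟨fun h i hi => by simp [h i hi hi, hi], fun h i hi _ => by simp [h i hi, hi]⟩

lemma measurableSet_prefixCylinder (σ : List Bool) : MeasurableSet (prefixCylinder σ) := by
  rw [prefixCylinder_eq_pi]
  exact .pi (Set.to_countable _) fun _ _ => .of_discrete

lemma disjoint_prefixCylinder {σ τ : List Bool} (h : ¬σ <+: τ) (h' : ¬τ <+: σ) :
    Disjoint (prefixCylinder σ) (prefixCylinder τ) := by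
  refine Set.disjoint_left.mpr fun y (hσ : _ = σ) (hτ : _ = τ) => ?_
  rcases le_total σ.length τ.length with hle | hle
  · exact h (hσ ▸ hτ ▸ prefixStr_prefix_prefixStr y hle)
  · exact h' (hσ ▸ hτ ▸ prefixStr_prefix_prefixStr y hle)

noncomputable def coinMeasure : Measure (ℕ → Bool) :=
  Measure.infinitePi fun _ => (PMF.uniformOfFintype Bool).toMeasure

lemma coinMeasure_prefixCylinder (σ : List Bool) :
    coinMeasure (prefixCylinder σ) = 2⁻¹ ^ σ.length := by
  rw [prefixCylinder_eq_pi, coinMeasure,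
    Measure.infinitePi_pi _ fun _ _ => MeasurableSet.of_discrete]
  simp [PMF.uniformOfFintype_apply]

instance : IsProbabilityMeasure coinMeasure := by
  unfold coinMeasure; infer_instance

theorem tsum_inv_two_pow_length_le_one {S : Set (List Bool)}
    (hS : ∀ p ∈ S, ∀ q ∈ S, p <+: q → p = q) :
    ∑' p : S, (2⁻¹ : ℝ≥0∞) ^ (p : List Bool).length ≤ 1 := by
  simp_rw [← coinMeasure_prefixCylinder]
  refine (tsum_meas_le_meas_iUnion_of_disjoint _ (As := fun p : S => prefixCylinder p)
    (fun p => measurableSet_prefixCylinder p) fun p q hpq =>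
      disjoint_prefixCylinder (fun h => hpq ?_) fun h => hpq ?_).trans
    (prob_le_one (μ := coinMeasure))
  · exact Subtype.ext (hS _ p.2 _ q.2 h)
  · exact (Subtype.ext (hS _ q.2 _ p.2 h)).symm

theorem SelfDelim.Omega_le_one {f : List Bool →. List Bool} (hf : SelfDelim f) : Omega f ≤ 1 :=
  tsum_inv_two_pow_length_le_one hf

theorem exists_mem_prefixCylinder_forall_notMem {ι : Type*} [Countable ι] (σ : ι → List Bool)
    (τ : List Bool) (h : ∑' i, (2⁻¹ : ℝ≥0∞) ^ (σ i).length < 2⁻¹ ^ τ.length) :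
    ∃ y ∈ prefixCylinder τ, ∀ i, y ∉ prefixCylinder (σ i) := by
  by_contra! hcover
  have : coinMeasure (prefixCylinder τ) ≤ coinMeasure (⋃ i, prefixCylinder (σ i)) :=
    measure_mono fun y hy => Set.mem_iUnion.mpr (hcover y hy)
  refine (this.trans (measure_iUnion_le _)).not_gt ?_
  simpa only [coinMeasure_prefixCylinder] using h

lemma summable_inv_two_pow_succ : Summable fun i : ℕ => (2⁻¹ : ℝ) ^ (i + 1) :=
  (summable_nat_add_iff 1).mpr (summable_geometric_of_lt_one (by norm_num) (by norm_num))

lemma digitTerm_le (x : ℕ → Bool) (i : ℕ) :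
    (if x i then (1 : ℝ) else 0) * 2⁻¹ ^ (i + 1) ≤ 2⁻¹ ^ (i + 1) := by
  split_ifs <;> simp

lemma summable_digitTerm (x : ℕ → Bool) :
    Summable fun i => (if x i then (1 : ℝ) else 0) * 2⁻¹ ^ (i + 1) :=
  .of_nonneg_of_le (fun i => by positivity) (digitTerm_le x) summable_inv_two_pow_succ

lemma realDigits_pos {x : ℕ → Bool} {i : ℕ} (hi : x i = true) : 0 < realDigits x :=
  (summable_digitTerm x).tsum_pos (fun j => by positivity) i (by simp [hi])

lemma realDigits_lt_one {x : ℕ → Bool} {i : ℕ} (hi : x i = false) : realDigits x < 1 := by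
  have hgeom : ∑' j : ℕ, (2⁻¹ : ℝ) ^ (j + 1) = 1 := by
    simp only [pow_succ', tsum_mul_left, tsum_geometric_inv_two]; norm_num
  rw [← hgeom]
  exact (summable_digitTerm x).tsum_lt_tsum (i := i) (digitTerm_le x) (by simp [hi])
    summable_inv_two_pow_succ

def dilute (y : ℕ → Bool) (i : ℕ) : Bool := if i % 2 = 0 then y (i / 2) else false

def diluteList (l : List Bool) : List Bool := l.flatMap fun b => [b, false]

def evenBits (l : List Bool) : List Bool :=
  (List.range ((l.length + 1) / 2)).map fun i => l.getD (2 * i) false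

lemma prefixStr_dilute_two_mul (y : ℕ → Bool) (k : ℕ) :
    prefixStr (dilute y) (2 * k) = diluteList (prefixStr y k) := by
  induction k with
  | zero => rfl
  | succ k ih =>
    rw [Nat.mul_succ, prefixStr_succ, prefixStr_succ, ih, prefixStr_succ]
    simp [dilute, diluteList, Nat.add_mod]

lemma evenBits_prefixStr_dilute (y : ℕ → Bool) (m : ℕ) :
    evenBits (prefixStr (dilute y) m) = prefixStr y ((m + 1) / 2) := by
  rw [evenBits, prefixStr_length, prefixStr]
  refine List.map_congr_left fun i hi => ?_
  have : 2 * i < m := by simp at hi; omega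
  simp [List.getD_eq_getElem?_getD, this, dilute]

lemma length_evenBits (l : List Bool) : (evenBits l).length = (l.length + 1) / 2 := by
  simp [evenBits]

lemma primrec_diluteList : Primrec diluteList :=
  Primrec.list_flatMap .id (Primrec.list_cons.comp .snd
    (Primrec.list_cons.comp (.const false) (.const []))).to₂

lemma Cpx_le {f : List Bool →. List Bool} {y w : List Bool} (h : y ∈ f w) :
    Cpx f y ≤ w.length :=
  Nat.sInf_le ⟨w, rfl, h⟩

lemma exists_length_eq_Cpx {f : List Bool →. List Bool} {y : List Bool} (h : ∃ w, y ∈ f w) :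
    ∃ w, w.length = Cpx f y ∧ y ∈ f w :=
  let ⟨w, hw⟩ := h
  Nat.sInf_mem (s := {n | ∃ w : List Bool, w.length = n ∧ y ∈ f w}) ⟨w.length, w, rfl, hw⟩

theorem UnivTM.exists_Cpx_le {T : List Bool →. List Bool} (hT : UnivTM T)
    {C : List Bool → List Bool} (hC : Computable C) :
    ∃ c, ∀ w, Cpx T (C w) ≤ w.length + c := by
  obtain ⟨c, hc⟩ := hT C hC
  refine ⟨c, fun w => ?_⟩
  obtain ⟨p, hp, hTp⟩ := hc w trivial
  exact (Cpx_le (hTp ▸ Part.mem_some (C w))).trans hp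

def unaryCode (n : ℕ) : List Bool := List.replicate n true ++ [false]

lemma eq_of_unaryCode_prefix {m n : ℕ} (h : unaryCode m <+: unaryCode n) : m = n := by
  have hle : m ≤ n := by simpa [unaryCode] using h.length_le
  by_contra hne
  have := h.getElem (i := m) (by simp [unaryCode])
  simp [unaryCode, lt_of_le_of_ne hle hne] at this

lemma primrec_unaryCode : Primrec unaryCode :=
  (Primrec.list_append.comp (Primrec.list_map .list_range (Primrec.const true).to₂)
    (.const [false])).of_eq fun n => by simp [unaryCode]

def unaryDecoder (w : List Bool) : Option (List Bool) :=
  if w = unaryCode (w.length - 1) then Encodable.decode (w.length - 1) else none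

lemma eq_unaryCode_of_unaryDecoder_isSome {w : List Bool} (h : (unaryDecoder w).isSome) :
    w = unaryCode (w.length - 1) := by
  by_contra hw
  simp [unaryDecoder, hw] at h

lemma unaryDecoder_unaryCode (s : List Bool) :
    unaryDecoder (unaryCode (Encodable.encode s)) = some s := by
  simp [unaryDecoder, unaryCode]

lemma selfDelim_unaryDecoder : SelfDelim fun w => (unaryDecoder w : Part (List Bool)) := by
  intro p hp q hq hpq
  rw [eq_unaryCode_of_unaryDecoder_isSome ((Part.ofOption_dom _).mp hp),
    eq_unaryCode_of_unaryDecoder_isSome ((Part.ofOption_dom _).mp hq)] at hpq ⊢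
  rw [eq_of_unaryCode_prefix hpq]

lemma partrec_unaryDecoder : Partrec fun w => (unaryDecoder w : Part (List Bool)) := by
  have hpred : Primrec fun w : List Bool => w.length - 1 :=
    Primrec.nat_sub.comp .list_length (.const 1)
  exact Computable.ofOption <| Primrec.to_comp <| Primrec.ite
    (Primrec.eq.comp .id (primrec_unaryCode.comp hpred)) (Primrec.decode.comp hpred) (.const none)

theorem UnivSD.exists_mem {U : List Bool →. List Bool} (hU : UnivSD U) (s : List Bool) :
    ∃ w, s ∈ U w := by
  obtain ⟨c, hc⟩ := hU.2 _ partrec_unaryDecoder selfDelim_unaryDecoder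
  have hs : s ∈ (unaryDecoder (unaryCode (Encodable.encode s)) : Part (List Bool)) := by
    rw [unaryDecoder_unaryCode]; exact Part.mem_some s
  obtain ⟨w, -, hw⟩ := hc _ (Part.dom_iff_mem.mpr ⟨s, hs⟩)
  exact ⟨w, hw ▸ hs⟩

theorem SelfDelim.exists_prefixStr_dilute_incompressible {U : List Bool →. List Bool}
    (hU : SelfDelim U) :
    ∃ y : ℕ → Bool, y 0 = true ∧
      ∀ w m, prefixStr (dilute y) m ∈ U w → m ≤ 2 * w.length + 4 := by
  let bad : Set (List Bool × List Bool) := {q | q.2 ∈ U q.1 ∧ 2 * q.1.length + 4 < q.2.length}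
  let program : bad → dom U := fun q => ⟨q.1.1, Part.dom_iff_mem.mpr ⟨_, q.2.1⟩⟩
  have hprogram : Function.Injective program := fun q q' h => by
    have h₁ : q.1.1 = q'.1.1 := congrArg Subtype.val h
    have h₂ : q.1.2 = q'.1.2 := Part.mem_unique q.2.1 (h₁ ▸ q'.2.1)
    exact Subtype.ext (Prod.ext h₁ h₂)
  have hsum :
      ∑' q : bad, (2⁻¹ : ℝ≥0∞) ^ (evenBits q.1.2).length < 2⁻¹ ^ [true].length :=
    calc ∑' q : bad, (2⁻¹ : ℝ≥0∞) ^ (evenBits q.1.2).length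
        ≤ ∑' q : bad, 2⁻¹ ^ 3 * 2⁻¹ ^ q.1.1.length := ENNReal.tsum_le_tsum fun q => by
          rw [← pow_add, length_evenBits]
          exact pow_le_pow_right_of_le_one' (by norm_num) (by have := q.2.2; omega)
      _ = 2⁻¹ ^ 3 * ∑' q : bad, 2⁻¹ ^ (program q : List Bool).length :=
          ENNReal.tsum_mul_left
      _ ≤ 2⁻¹ ^ 3 * Omega U := by
          gcongr
          exact ENNReal.tsum_comp_le_tsum_of_injective hprogram _
      _ ≤ 2⁻¹ ^ 3 * 1 := by gcongr; exact hU.Omega_le_one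
      _ < 2⁻¹ ^ [true].length := by
          rw [mul_one, List.length_singleton, pow_one, ← ENNReal.inv_pow, ENNReal.inv_lt_inv]
          norm_num
  obtain ⟨y, hy, hfree⟩ := exists_mem_prefixCylinder_forall_notMem _ _ hsum
  refine ⟨y, by simpa [prefixCylinder, prefixStr] using hy, fun w m hw => ?_⟩
  by_contra! hlong
  apply hfree ⟨(w, prefixStr (dilute y) m), hw, by rwa [prefixStr_length]⟩
  simpa only [evenBits_prefixStr_dilute] using mem_prefixCylinder_prefixStr y ((m + 1) / 2)

def compressor (w : List Bool) : List Bool :=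
  diluteList ((Encodable.decode (α := List Bool) w.length).getD [] ++ w)

lemma computable_compressor : Computable compressor :=
  (primrec_diluteList.comp <| Primrec.list_append.comp
    (Primrec.option_getD.comp (Primrec.decode.comp .list_length) (.const [])) .id).to_comp

lemma compressor_map_range_encode (y : ℕ → Bool) (t : ℕ) :
    compressor ((List.range (Encodable.encode (prefixStr y t))).map fun i => y (t + i)) =
      prefixStr (dilute y) (2 * (t + Encodable.encode (prefixStr y t))) := by
  simp [compressor, prefixStr_dilute_two_mul, prefixStr_add]

theorem UnivTM.exists_Cpx_prefixStr_dilute_le {T : List Bool →. List Bool} (hT : UnivTM T) :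
    ∃ c, ∀ y t, Cpx T (prefixStr (dilute y) (2 * (t + Encodable.encode (prefixStr y t)))) ≤
      Encodable.encode (prefixStr y t) + c := by
  obtain ⟨c, hc⟩ := hT.exists_Cpx_le computable_compressor
  refine ⟨c, fun y t => ?_⟩
  simpa [compressor_map_range_encode] using
    hc ((List.range (Encodable.encode (prefixStr y t))).map fun i => y (t + i))

theorem stmt_13_general (U : List Bool →. List Bool) (hUuniv : UnivSD U)
    (T : List Bool →. List Bool) (hTuniv : UnivTM T) :
    ∃ β : ℝ, 0 < β ∧ β < 1 ∧ ∃ x : ℕ → Bool, β = realDigits x ∧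
      (∃ c : ℝ, 0 ≤ c ∧ ∀ m : ℕ, 1 ≤ m →
        (Cpx U (prefixStr x m) : ℝ) ≥ m / 2 - c) ∧
      ¬ (∃ c' : ℝ, 0 ≤ c' ∧ ∀ m : ℕ, 1 ≤ m →
        (Cpx T (prefixStr x m) : ℝ) ≥ m / 2 - c') := by
  obtain ⟨y, hy0, hy⟩ := hUuniv.1.exists_prefixStr_dilute_incompressible
  refine ⟨realDigits (dilute y), realDigits_pos (i := 0) (by simpa [dilute] using hy0),
    realDigits_lt_one (i := 1) rfl, dilute y, rfl, ⟨2, by norm_num, fun m _ => ?_⟩, ?_⟩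
  · obtain ⟨w, hw, hmem⟩ := exists_length_eq_Cpx (hUuniv.exists_mem (prefixStr (dilute y) m))
    have : (m : ℝ) ≤ 2 * w.length + 4 := by exact_mod_cast hy w m hmem
    rw [← hw]; linarith
  · rintro ⟨c', hc'0, hc'⟩
    obtain ⟨c, hc⟩ := hTuniv.exists_Cpx_prefixStr_dilute_le
    obtain ⟨t, ht⟩ := exists_nat_gt (c + c')
    have ht0 : 0 < t := Nat.cast_pos.mp ((by positivity : (0 : ℝ) ≤ c + c').trans_lt ht)
    set l := Encodable.encode (prefixStr y t)
    have hupper : (Cpx T (prefixStr (dilute y) (2 * (t + l))) : ℝ) ≤ l + c := by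
      exact_mod_cast hc y t
    have hlower := hc' (2 * (t + l)) (by omega)
    push_cast at hlower
    linarith

/-- There exists a real `β ∈ (0,1)` which is Chaitin `1/2`-random but not
`1/2`-`K`-random. -/
theorem stmt_13 (U : List Bool →. List Bool) (hU : Partrec U) (hUuniv : UnivSD U)
    (T : List Bool →. List Bool) (hT : Partrec T) (hTuniv : UnivTM T) :
    ∃ β : ℝ, 0 < β ∧ β < 1 ∧ ∃ x : ℕ → Bool, β = realDigits x ∧
      (∃ c : ℝ, 0 ≤ c ∧ ∀ m : ℕ, 1 ≤ m →
        (Cpx U (prefixStr x m) : ℝ) ≥ m / 2 - c) ∧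
      ¬ (∃ c' : ℝ, 0 ≤ c' ∧ ∀ m : ℕ, 1 ≤ m →
        (Cpx T (prefixStr x m) : ℝ) ≥ m / 2 - c') :=
  stmt_13_general U hUuniv T hTuniv
end
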